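/- Let M be a 2-dimensional submodule of F[x]^2 with minimal Gröbner basis {g_1 = (g_11, g_12), g_2 = (g_21, g_22)} such that g_12(0) = 0 and g_22(0) ≠ 0. Then g_2 has minimal leading monomial among all f = (f_1, f_2) in M with f_2(0) ≠ 0, and every such minimal f has the form f = a_2 g_2 + a_1 g_1 with a_2 a nonzero scalar and a_1 ∈ F[x] with lm(a_1 g_1) ≤ lm(g_2). -/

import Mathlib

open Polynomial

open scoped Classical

/-- Support of a polynomial vector: monomials `(degree, position)` ordered lexicographically,
which is the term-over-position (top) ordering. -/
noncomputable def vsupp {R : Type*} [CommRing R] {q : ℕ} (f : Fin q → R[X]) :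
    Finset (Lex (ℕ × Fin q)) :=
  Finset.univ.biUnion fun i => (f i).support.image fun α => toLex (α, i)

/-- Leading monomial w.r.t. the top ordering (`⊥` for the zero vector). -/
noncomputable def vlm {R : Type*} [CommRing R] {q : ℕ} (f : Fin q → R[X]) :
    WithBot (Lex (ℕ × Fin q)) := (vsupp f).max

/-- Degree of the leading monomial (junk value `0` for the zero vector). -/
noncomputable def vdeg {R : Type*} [CommRing R] {q : ℕ} (f : Fin q → R[X]) : ℕ :=
  WithBot.unbotD 0 ((vlm f).map fun m => (ofLex m).1)

/-- Leading position. -/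
noncomputable def vlpos {R : Type*} [CommRing R] {q : ℕ} (f : Fin q → R[X]) : WithBot (Fin q) :=
  (vlm f).map fun m => (ofLex m).2

/-- Leading coefficient. -/
noncomputable def vlc {R : Type*} [CommRing R] {q : ℕ} (f : Fin q → R[X]) : R :=
  WithBot.unbotD 0 ((vlm f).map fun m => (f (ofLex m).2).coeff (ofLex m).1)

/-- Leading term of a polynomial vector, as a polynomial vector. -/
noncomputable def vlt {R : Type*} [CommRing R] {q : ℕ} (f : Fin q → R[X]) : Fin q → R[X] :=
  WithBot.unbotD 0 ((vlm f).map fun m => fun j : Fin q =>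
    if j = (ofLex m).2 then C ((f (ofLex m).2).coeff (ofLex m).1) * X ^ (ofLex m).1 else 0)

/-- The leading term submodule `L(F)`. -/
noncomputable def ltSubmodule {R : Type*} [CommRing R] {q : ℕ} (S : Set (Fin q → R[X])) :
    Submodule R[X] (Fin q → R[X]) :=
  Submodule.span R[X] (vlt '' S)

/-- `G` is a Gröbner basis of `M`: `G ⊆ M` and `L(G) = L(M)`. -/
def IsGroebner {R : Type*} [CommRing R] {q : ℕ} (M : Submodule R[X] (Fin q → R[X]))
    (G : Finset (Fin q → R[X])) : Prop :=
  (G : Set (Fin q → R[X])) ⊆ M ∧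
    ltSubmodule (G : Set (Fin q → R[X])) = ltSubmodule (M : Set (Fin q → R[X]))

/-- One-step reduction of `f` to `h` modulo the finite set `Fs` (Adams–Loustaunau Def. 4.1.1). -/
def ReducesOneStep {R : Type*} [CommRing R] {q : ℕ} (Fs : Finset (Fin q → R[X]))
    (f h : Fin q → R[X]) : Prop :=
  f ≠ 0 ∧ ∃ (m : ℕ) (jv : Fin m → Fin q → R[X]) (α : Fin m → ℕ) (β : Fin m → R),
    0 < m ∧ (∀ i, jv i ∈ Fs) ∧ (∀ i, jv i ≠ 0) ∧ Function.Injective jv ∧ (∀ i, β i ≠ 0) ∧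
    (∀ i, vlm f = (vlm (jv i)).map fun mm => toLex (α i + (ofLex mm).1, (ofLex mm).2)) ∧
    vlt f = ∑ i, (C (β i) * X ^ α i) • vlt (jv i) ∧
    h = f - ∑ i, (C (β i) * X ^ α i) • jv i

/-- Minimal Gröbner basis: a Gröbner basis each of whose elements is irreducible
modulo the others. -/
def IsMinimalGroebner {R : Type*} [CommRing R] {q : ℕ} (M : Submodule R[X] (Fin q → R[X]))
    (G : Finset (Fin q → R[X])) : Prop :=
  IsGroebner M G ∧ ∀ g ∈ G, ∀ h, ¬ ReducesOneStep (G.erase g) g h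

/-!
Since `L(M) = L(g₁, g₂)`, the leading term of any `f ∈ M` is a combination of the leading terms
of `g₁, g₂`; subtracting the matching multiples of `g₁, g₂` lowers the leading monomial, and since
the top ordering is a well-order this yields `f = a₁ g₁ + a₂ g₂` with `lm (aᵢ gᵢ) ≤ lm f`.
Comparing constant coefficients of second components, `g₁₂(0) = 0` forces `a₂(0) ≠ 0` when
`f₂(0) ≠ 0`, so `lm g₂ ≤ lm (a₂ g₂) ≤ lm f`; for a minimal `f` this forces `a₂` to be a constant.
-/

open Prod.Lex

section CommRing

variable {R : Type*} [CommRing R] {q : ℕ} {f g : Fin q → R[X]}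

theorem mem_vsupp {n : ℕ} {i : Fin q} : toLex (n, i) ∈ vsupp f ↔ (f i).coeff n ≠ 0 := by
  simp [vsupp]

theorem vlm_le_iff {b : WithBot (Lex (ℕ × Fin q))} :
    vlm f ≤ b ↔ ∀ n i, (f i).coeff n ≠ 0 → ↑(toLex (n, i)) ≤ b := by
  simp only [vlm, Finset.max_le_iff, toLex.surjective.forall, Prod.forall, mem_vsupp]

theorem vlm_lt_iff {m : Lex (ℕ × Fin q)} :
    vlm f < ↑m ↔ ∀ n i, (f i).coeff n ≠ 0 → toLex (n, i) < m := by
  simp only [vlm, Finset.max, Finset.sup_lt_iff (WithBot.bot_lt_coe m), WithBot.coe_lt_coe,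
    toLex.surjective.forall, Prod.forall, mem_vsupp]

theorem le_vlm {n : ℕ} {i : Fin q} (h : (f i).coeff n ≠ 0) : ↑(toLex (n, i)) ≤ vlm f :=
  vlm_le_iff.1 le_rfl n i h

theorem coeff_eq_zero_of_vlm_lt {n : ℕ} {i : Fin q} (h : vlm f < ↑(toLex (n, i))) :
    (f i).coeff n = 0 :=
  not_not.1 fun hn => (le_vlm hn).not_gt h

@[simp]
theorem vlm_zero : vlm (0 : Fin q → R[X]) = ⊥ :=
  le_bot_iff.1 (vlm_le_iff.2 (by simp))

theorem exists_vlm_eq (hf : f ≠ 0) : ∃ (d : ℕ) (j : Fin q), vlm f = ↑(toLex (d, j)) := by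
  obtain ⟨i, hi⟩ := Function.ne_iff.1 hf
  obtain ⟨n, hn⟩ := not_forall.1 (Polynomial.ext_iff.not.1 hi)
  obtain ⟨m, hm⟩ :=
    WithBot.ne_bot_iff_exists.1 (ne_bot_of_le_ne_bot WithBot.coe_ne_bot (le_vlm hn))
  exact ⟨(ofLex m).1, (ofLex m).2, hm.symm⟩

theorem coeff_vlm_ne_zero {d : ℕ} {j : Fin q} (h : vlm f = ↑(toLex (d, j))) :
    (f j).coeff d ≠ 0 :=
  mem_vsupp.1 (Finset.mem_of_max h)

theorem vlm_add_le : vlm (f + g) ≤ max (vlm f) (vlm g) :=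
  vlm_le_iff.2 fun n i h => by
    by_cases hf : (f i).coeff n = 0
    · exact (le_vlm (by simpa [hf] using h)).trans (le_max_right _ _)
    · exact (le_vlm hf).trans (le_max_left _ _)

theorem vlm_sum_le {ι : Type*} {s : Finset ι} {h : ι → Fin q → R[X]}
    {b : WithBot (Lex (ℕ × Fin q))} (hb : ∀ i ∈ s, vlm (h i) ≤ b) : vlm (∑ i ∈ s, h i) ≤ b :=
  Finset.sum_induction _ (vlm · ≤ b) (fun _ _ h₁ h₂ => vlm_add_le.trans (max_le h₁ h₂))
    (by simp) hb

theorem vlm_sub_lt {d : ℕ} {j : Fin q} (hf : vlm f = ↑(toLex (d, j))) (hg : vlm g ≤ vlm f)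
    (hcoeff : (g j).coeff d = (f j).coeff d) : vlm (f - g) < vlm f := by
  rw [hf, vlm_lt_iff]
  intro n i hn
  by_contra! hle
  rcases hle.eq_or_lt with he | hlt
  · obtain ⟨rfl, rfl⟩ : d = n ∧ j = i := by simpa using he
    simp [hcoeff] at hn
  · have hlt' : vlm f < ↑(toLex (n, i)) := hf ▸ WithBot.coe_lt_coe.2 hlt
    simp [coeff_eq_zero_of_vlm_lt hlt', coeff_eq_zero_of_vlm_lt (hg.trans_lt hlt')] at hn

theorem natDegree_le_of_vlm_le {d : ℕ} {j : Fin q} (h : vlm f ≤ ↑(toLex (d, j))) (i : Fin q) :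
    (f i).natDegree ≤ d :=
  natDegree_le_iff_coeff_eq_zero.2 fun _ hn =>
    coeff_eq_zero_of_vlm_lt (h.trans_lt (WithBot.coe_lt_coe.2 (toLex_lt_toLex.2 (.inl hn))))

theorem natDegree_lt_of_vlm_le {d : ℕ} {j i : Fin q} (h : vlm f ≤ ↑(toLex (d, j))) (hji : j < i)
    (hfi : f i ≠ 0) : (f i).natDegree < d := by
  refine (natDegree_le_of_vlm_le h i).lt_of_ne fun hd => leadingCoeff_ne_zero.2 hfi ?_
  rw [leadingCoeff, hd]
  exact coeff_eq_zero_of_vlm_lt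
    (h.trans_lt (WithBot.coe_lt_coe.2 (toLex_lt_toLex.2 (.inr ⟨rfl, hji⟩))))

theorem natDegree_eq_of_vlm {d : ℕ} {j : Fin q} (h : vlm f = ↑(toLex (d, j))) :
    (f j).natDegree = d :=
  (natDegree_le_of_vlm_le h.le j).antisymm (le_natDegree_of_ne_zero (coeff_vlm_ne_zero h))

theorem vlm_smul_le (p : R[X]) {d : ℕ} {j : Fin q} (hg : vlm g ≤ ↑(toLex (d, j))) :
    vlm (p • g) ≤ ↑(toLex (p.natDegree + d, j)) := by
  refine vlm_le_iff.2 fun n i hn => WithBot.coe_le_coe.2 (toLex_le_toLex.2 ?_)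
  dsimp only
  have hgi : g i ≠ 0 := by rintro h; simp [h] at hn
  have hn' : n ≤ p.natDegree + (g i).natDegree :=
    (le_natDegree_of_ne_zero hn).trans natDegree_mul_le
  rcases le_or_gt i j with hij | hji
  · have := natDegree_le_of_vlm_le hg i
    omega
  · have := natDegree_lt_of_vlm_le hg hji hgi
    omega

@[simp]
theorem vlt_zero : vlt (0 : Fin q → R[X]) = 0 := by
  rw [vlt, vlm_zero]
  rfl

theorem vlt_of_vlm {d : ℕ} {j : Fin q} (h : vlm f = ↑(toLex (d, j))) :
    vlt f = Pi.single j (C ((f j).coeff d) * X ^ d) := by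
  rw [vlt, h]
  funext i
  by_cases hi : i = j <;> simp [hi]


theorem exists_smul_coeff_eq_coeff_smul_vlt (g : Fin q → R[X]) (p : R[X]) (d : ℕ) (j : Fin q) :
    ∃ a : R[X], vlm (a • g) ≤ ↑(toLex (d, j)) ∧ ((a • g) j).coeff d = ((p • vlt g) j).coeff d := by
  by_cases hg : g = 0
  · exact ⟨0, by simp, by simp [hg]⟩
  obtain ⟨d₀, j₀, hg₀⟩ := exists_vlm_eq hg
  by_cases h : j = j₀ ∧ d₀ ≤ d
  · obtain ⟨rfl, hd⟩ := h
    obtain ⟨k, rfl⟩ := Nat.exists_eq_add_of_le hd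
    refine ⟨monomial k (p.coeff k), ?_, ?_⟩
    · refine (vlm_smul_le _ hg₀.le).trans (WithBot.coe_le_coe.2 (toLex_mono ?_))
      have := natDegree_monomial_le (p.coeff k) (m := k)
      exact Prod.mk_le_mk.2 ⟨by omega, le_rfl⟩
    · rw [Pi.smul_apply, Pi.smul_apply, vlt_of_vlm hg₀, Pi.single_eq_same, smul_eq_mul,
        smul_eq_mul, coeff_monomial_mul, ← mul_assoc, add_comm, coeff_mul_X_pow, coeff_mul_C]
  · refine ⟨0, by simp, ?_⟩
    rw [zero_smul, Pi.zero_apply, coeff_zero, Pi.smul_apply, vlt_of_vlm hg₀, smul_eq_mul]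
    by_cases hj : j = j₀
    · subst hj
      rw [Pi.single_eq_same, ← mul_assoc, coeff_mul_X_pow', if_neg (by tauto)]
    · rw [Pi.single_eq_of_ne hj, mul_zero, coeff_zero]

theorem exists_eq_sum_smul_vlt_of_mem_ltSubmodule {G : Finset (Fin q → R[X])} {v : Fin q → R[X]}
    (hv : v ∈ ltSubmodule (G : Set (Fin q → R[X]))) :
    ∃ c : (Fin q → R[X]) → R[X], v = ∑ g ∈ G, c g • vlt g := by
  obtain ⟨l, hl, rfl⟩ := (Finsupp.mem_span_image_iff_linearCombination R[X]).1 hv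
  exact ⟨l, Finsupp.linearCombination_apply_of_mem_supported R[X] hl⟩

theorem IsGroebner.exists_eq_sum_smul {M : Submodule R[X] (Fin q → R[X])}
    {G : Finset (Fin q → R[X])} (hG : IsGroebner M G) (hf : f ∈ M) :
    ∃ a : (Fin q → R[X]) → R[X], f = ∑ g ∈ G, a g • g ∧ ∀ g ∈ G, vlm (a g • g) ≤ vlm f := by
  induction hb : vlm f using WellFoundedLT.induction generalizing f with
  | ind b ih =>
  subst hb
  by_cases hf0 : f = 0
  · exact ⟨0, by simp [hf0], by simp⟩
  obtain ⟨d, j, hm⟩ := exists_vlm_eq hf0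
  have hlt_mem : vlt f ∈ ltSubmodule (G : Set (Fin q → R[X])) :=
    hG.2 ▸ Submodule.subset_span (Set.mem_image_of_mem vlt hf)
  obtain ⟨c, hc⟩ := exists_eq_sum_smul_vlt_of_mem_ltSubmodule hlt_mem
  choose a ha hcoeff using fun g => exists_smul_coeff_eq_coeff_smul_vlt g (c g) d j
  have hlt : vlm (f - ∑ g ∈ G, a g • g) < vlm f := by
    refine vlm_sub_lt hm (vlm_sum_le fun g _ => hm ▸ ha g) ?_
    rw [Finset.sum_apply, finsetSum_coeff]
    simp only [hcoeff]
    rw [← finsetSum_coeff, ← Finset.sum_apply, ← hc, vlt_of_vlm hm]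
    simp
  obtain ⟨a', hrep, hle⟩ :=
    ih _ hlt (M.sub_mem hf (M.sum_mem fun g hg => M.smul_mem _ (hG.1 hg))) rfl
  refine ⟨a + a', ?_, fun g hg => ?_⟩
  · simp only [Pi.add_apply, add_smul, Finset.sum_add_distrib, ← hrep]
    abel
  · rw [Pi.add_apply, add_smul]
    exact vlm_add_le.trans (max_le (hm ▸ ha g) ((hle g hg).trans hlt.le))

theorem IsGroebner.exists_eq_smul_add_smul {M : Submodule R[X] (Fin q → R[X])}
    {g₁ g₂ : Fin q → R[X]} (hG : IsGroebner M {g₁, g₂}) (hne : g₁ ≠ g₂) (hf : f ∈ M) :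
    ∃ a₁ a₂ : R[X], f = a₁ • g₁ + a₂ • g₂ ∧ vlm (a₁ • g₁) ≤ vlm f ∧ vlm (a₂ • g₂) ≤ vlm f := by
  obtain ⟨a, hrep, ha⟩ := hG.exists_eq_sum_smul hf
  rw [Finset.sum_pair hne] at hrep
  exact ⟨a g₁, a g₂, hrep, ha g₁ (by simp), ha g₂ (by simp)⟩

end CommRing

section NoZeroDivisors

variable {R : Type*} [CommRing R] [NoZeroDivisors R] {q : ℕ} {g : Fin q → R[X]} {p : R[X]}

theorem vlm_smul (hp : p ≠ 0) {d : ℕ} {j : Fin q} (hg : vlm g = ↑(toLex (d, j))) :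
    vlm (p • g) = ↑(toLex (p.natDegree + d, j)) := by
  refine (vlm_smul_le p hg.le).antisymm (le_vlm ?_)
  have hgj : g j ≠ 0 := fun h => coeff_vlm_ne_zero hg (by simp [h])
  rw [Pi.smul_apply, smul_eq_mul, ← natDegree_eq_of_vlm hg, coeff_mul_degree_add_degree]
  exact mul_ne_zero (leadingCoeff_ne_zero.2 hp) (leadingCoeff_ne_zero.2 hgj)

theorem vlm_le_vlm_smul (hp : p ≠ 0) (hg : g ≠ 0) : vlm g ≤ vlm (p • g) := by
  obtain ⟨d, j, hd⟩ := exists_vlm_eq hg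
  rw [hd, vlm_smul hp hd]
  exact WithBot.coe_le_coe.2 (toLex_mono (Prod.mk_le_mk.2 ⟨Nat.le_add_left _ _, le_rfl⟩))

theorem natDegree_eq_zero_of_vlm_smul_le (hp : p ≠ 0) (hg : g ≠ 0) (h : vlm (p • g) ≤ vlm g) :
    p.natDegree = 0 := by
  obtain ⟨d, j, hd⟩ := exists_vlm_eq hg
  rw [hd, vlm_smul hp hd, WithBot.coe_le_coe, toLex_le_toLex] at h
  dsimp only at h
  omega

end NoZeroDivisors

theorem minimal_nonzero_const_param_general {F : Type*} [Field F]
    (M : Submodule (Polynomial F) (Fin 2 → Polynomial F))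
    (g₁ g₂ : Fin 2 → Polynomial F)
    (hGB : IsMinimalGroebner M ({g₁, g₂} : Finset (Fin 2 → Polynomial F)))
    (h12 : (g₁ 1).coeff 0 = 0) (h22 : (g₂ 1).coeff 0 ≠ 0) :
    (∀ f, f ∈ M → (f 1).coeff 0 ≠ 0 → vlm g₂ ≤ vlm f) ∧
    (∀ f, f ∈ M → (f 1).coeff 0 ≠ 0 →
      (∀ f', f' ∈ M → (f' 1).coeff 0 ≠ 0 → vlm f ≤ vlm f') →
      ∃ (a₂ : F) (a₁ : Polynomial F), a₂ ≠ 0 ∧ vlm (a₁ • g₁) ≤ vlm g₂ ∧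
        f = (C a₂) • g₂ + a₁ • g₁) := by
  have hne : g₁ ≠ g₂ := by rintro rfl; exact h22 h12
  have hg₂ : g₂ ≠ 0 := by rintro rfl; exact h22 (coeff_zero 0)
  have rep : ∀ f ∈ M, (f 1).coeff 0 ≠ 0 → ∃ a₁ a₂ : F[X], f = a₁ • g₁ + a₂ • g₂ ∧
      vlm (a₁ • g₁) ≤ vlm f ∧ vlm (a₂ • g₂) ≤ vlm f ∧ a₂ ≠ 0 := by
    intro f hf hf0
    obtain ⟨a₁, a₂, rfl, h₁, h₂⟩ := hGB.1.exists_eq_smul_add_smul hne hf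
    refine ⟨a₁, a₂, rfl, h₁, h₂, ?_⟩
    rintro rfl
    simp [h12] at hf0
  have lower : ∀ f ∈ M, (f 1).coeff 0 ≠ 0 → vlm g₂ ≤ vlm f := fun f hf hf0 => by
    obtain ⟨_, _, -, -, h₂, ha₂⟩ := rep f hf hf0
    exact (vlm_le_vlm_smul ha₂ hg₂).trans h₂
  refine ⟨lower, fun f hf hf0 hmin => ?_⟩
  have heq : vlm f = vlm g₂ := (hmin g₂ (hGB.1.1 (by simp)) h22).antisymm (lower f hf hf0)
  obtain ⟨a₁, a₂, rfl, h₁, h₂, ha₂⟩ := rep f hf hf0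
  obtain ⟨c, rfl⟩ := natDegree_eq_zero.1 (natDegree_eq_zero_of_vlm_smul_le ha₂ hg₂ (heq ▸ h₂))
  exact ⟨c, a₁, by rintro rfl; simp at ha₂, heq ▸ h₁, add_comm _ _⟩

/-- Let `M ⊆ F[x]^2` be a 2-dimensional submodule with minimal Gröbner basis
`{g₁ = (g₁₁,g₁₂), g₂ = (g₂₁,g₂₂)}` with `g₁₂(0) = 0` and `g₂₂(0) ≠ 0`. Then `g₂` has minimal
leading monomial among all `f = (f₁,f₂) ∈ M` with `f₂(0) ≠ 0`, and every such minimal `f` has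
the form `f = a₂ g₂ + a₁ g₁` with `a₂` a nonzero scalar and `lm (a₁ g₁) ≤ lm g₂`. -/
theorem minimal_nonzero_const_param {F : Type*} [Field F]
    (M : Submodule (Polynomial F) (Fin 2 → Polynomial F))
    (hrank : Module.rank (Polynomial F) ↥M = 2)
    (g₁ g₂ : Fin 2 → Polynomial F) (hne : g₁ ≠ g₂)
    (hGB : IsMinimalGroebner M ({g₁, g₂} : Finset (Fin 2 → Polynomial F)))
    (h12 : (g₁ 1).coeff 0 = 0) (h22 : (g₂ 1).coeff 0 ≠ 0) :
    (∀ f, f ∈ M → (f 1).coeff 0 ≠ 0 → vlm g₂ ≤ vlm f) ∧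
    (∀ f, f ∈ M → (f 1).coeff 0 ≠ 0 →
      (∀ f', f' ∈ M → (f' 1).coeff 0 ≠ 0 → vlm f ≤ vlm f') →
      ∃ (a₂ : F) (a₁ : Polynomial F), a₂ ≠ 0 ∧ vlm (a₁ • g₁) ≤ vlm g₂ ∧
        f = (C a₂) • g₂ + a₁ • g₁) :=
  minimal_nonzero_const_param_general M g₁ g₂ hGB h12 h22
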